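/- Let T > 0, ε > 0. Let a be continuous with a ≥ 0 on [0,1]×[0,T], let b be continuous with continuous x-derivative on [0,1]×[0,T], let c ≥ 0 be continuous and bounded, and let f be continuous with f ≥ ε on [0,1]×[0,T]. Let α⁰, α¹ > 0 and r⁰ ≥ ε, r¹ ≥ ε. Suppose ρ is continuous on [0,1]×[0,T], twice continuously differentiable in x and once in t on [0,1]×(0,T], satisfies ρ_t = ((ε+a)ρ_x + bρ)_x − cρ + f on (0,1)×(0,T], with boundary conditions ((ε+a)ρ_x + bρ)(1,t) = α¹(r¹ − ρ(1,t)) and ((ε+a)ρ_x + bρ)(0,t) = α⁰(ρ(0,t) − r⁰), and ρ(x,0) ≥ ε for all x ∈ [0,1]. Then there exists a constant δ > 0, depending only on ε, α⁰, α¹, sup|b|, sup|b_x| and sup c, such that ρ(x,t) ≥ δ for all (x,t) ∈ [0,1]×[0,T]. -/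

import Mathlib

/-!
Suppose `ρ` drops to a level `δ < ε` and let `t₀` be the first time at which `min ρ(·, t₀) = δ`,
attained at `x₀`; then `ρ_t(x₀, t₀) ≤ 0`. At an interior point `ρ_x = 0` and `ρ_xx ≥ 0`, so the
equation gives `0 ≥ ρ_t ≥ b_x δ - c δ + f ≥ ε - (B' + Cc) δ`. At `x₀ = 0` we have `ρ_x ≥ 0`, and the
Robin condition gives `α⁰ ε ≤ (α⁰ + B) δ`; symmetrically `α¹ ε ≤ (α¹ + B) δ` at `x₀ = 1`. A small
enough `δ > 0` rules out all three cases.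
-/

open Set Filter Topology

theorem IsMinOn.mul_deriv_nonneg {g : ℝ → ℝ} {s : Set ℝ} {x y : ℝ} (h : IsMinOn g s x)
    (hxy : segment ℝ x y ⊆ s) : 0 ≤ (y - x) * deriv g x := by
  by_cases hg : DifferentiableAt ℝ g x
  · simpa [mul_comm] using h.localize.hasFDerivWithinAt_nonneg
      hg.hasDerivAt.hasFDerivAt.hasFDerivWithinAt (sub_mem_posTangentConeAt_of_segment_subset hxy)
  · simp [deriv_zero_of_not_differentiableAt hg]

theorem IsMinOn.deriv_nonneg_of_left_endpoint {g : ℝ → ℝ} {a b : ℝ} (hab : a < b)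
    (h : IsMinOn g (Icc a b) a) : 0 ≤ deriv g a :=
  nonneg_of_mul_nonneg_right (h.mul_deriv_nonneg (segment_eq_Icc hab.le).subset) (sub_pos.2 hab)

theorem IsMinOn.deriv_nonpos_of_right_endpoint {g : ℝ → ℝ} {a b : ℝ} (hab : a < b)
    (h : IsMinOn g (Icc a b) b) : deriv g b ≤ 0 :=
  nonpos_of_mul_nonneg_right (h.mul_deriv_nonneg (segment_eq_Icc' b a ▸ by simp [hab.le]))
    (sub_neg.2 hab)

theorem IsLocalMin.deriv_deriv_nonneg {g : ℝ → ℝ} {x : ℝ} (h : IsLocalMin g x)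
    (hg : ContinuousAt g x) : 0 ≤ deriv (deriv g) x := by
  by_contra! hneg
  have hconst : g =ᶠ[𝓝 x] fun _ => g x :=
    (h.and (isLocalMax_of_deriv_deriv_neg hneg h.deriv_eq_zero hg)).mono
      fun y hy => le_antisymm hy.2 hy.1
  refine hneg.ne ?_
  rw [hconst.deriv.deriv_eq]
  simp

theorem HasDerivAt.continuousAt_mul_of_eq_zero {𝕜 : Type*} [NontriviallyNormedField 𝕜]
    {φ ψ : 𝕜 → 𝕜} {ψ' x : 𝕜} (hψ : HasDerivAt ψ ψ' x) (hψx : ψ x = 0) (hφ : ContinuousAt φ x) :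
    HasDerivAt (fun y => φ y * ψ y) (φ x * ψ') x := by
  rw [hasDerivAt_iff_tendsto_slope] at hψ ⊢
  have hslope : slope (fun y => φ y * ψ y) x = fun y => φ y * slope ψ x y := by
    ext y
    simp only [slope_def_field, hψx, mul_zero, sub_zero, mul_div_assoc]
  rw [hslope]
  exact (hφ.tendsto.mono_left nhdsWithin_le_nhds).mul hψ

theorem IsLocalMin.mul_le_deriv_flux {g κ β : ℝ → ℝ} {x : ℝ} (hmin : IsLocalMin g x)
    (hg : ContDiffAt ℝ 2 g x) (hκ : ContinuousAt κ x) (hκx : 0 ≤ κ x)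
    (hβ : DifferentiableAt ℝ β x) :
    deriv β x * g x ≤ deriv (fun y => κ y * deriv g y + β y * g y) x := by
  have hg' : deriv g x = 0 := hmin.deriv_eq_zero
  have hg'' : DifferentiableAt ℝ (deriv g) x :=
    (hg.derivWithin (m := 1) (by norm_num)).differentiableAt (by norm_num)
  have hflux : HasDerivAt (fun y => κ y * deriv g y + β y * g y)
      (κ x * deriv (deriv g) x + (deriv β x * g x + β x * deriv g x)) x :=
    (hg''.hasDerivAt.continuousAt_mul_of_eq_zero hg' hκ).add
      (hβ.hasDerivAt.mul (hg.differentiableAt (by norm_num)).hasDerivAt)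
  rw [hflux.deriv, hg', mul_zero, add_zero, le_add_iff_nonneg_left]
  exact mul_nonneg hκx (hmin.deriv_deriv_nonneg hg.continuousAt)

theorem IsLocalMin.le_mul_of_flux_balance_nonpos {g κ β : ℝ → ℝ} {x c f B' C ε : ℝ}
    (hmin : IsLocalMin g x) (hg : ContDiffAt ℝ 2 g x) (hκ : ContinuousAt κ x) (hκx : 0 ≤ κ x)
    (hβ : DifferentiableAt ℝ β x) (hβ' : |deriv β x| ≤ B') (hc : c ≤ C) (hf : ε ≤ f)
    (hgx : 0 ≤ g x) (hbal : deriv (fun y => κ y * deriv g y + β y * g y) x - c * g x + f ≤ 0) :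
    ε ≤ (B' + C) * g x := by
  have hflux := hmin.mul_le_deriv_flux hg hκ hκx hβ
  nlinarith [mul_le_mul_of_nonneg_right (neg_le_of_abs_le hβ') hgx,
    mul_le_mul_of_nonneg_right hc hgx]

theorem exists_first_touch {X : Type*} [TopologicalSpace X] [T2Space X] {s : Set X}
    (hs : IsCompact s) {u : X → ℝ → ℝ} {T δ : ℝ}
    (hu : ContinuousOn (fun p : X × ℝ => u p.1 p.2) (s ×ˢ Icc 0 T))
    (h0 : ∀ x ∈ s, δ < u x 0) {x : X} {t : ℝ} (hx : x ∈ s) (ht : t ∈ Icc 0 T) (hxt : u x t ≤ δ) :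
    ∃ x₀ ∈ s, ∃ t₀ ∈ Ioc 0 T, u x₀ t₀ = δ ∧ IsMinOn (fun y => u y t₀) s x₀ ∧
      IsMinOn (u x₀) (Icc 0 t₀) t₀ := by
  set S := s ×ˢ Icc 0 T ∩ (fun p : X × ℝ => u p.1 p.2) ⁻¹' Iic δ
  have hS : IsCompact S := (hs.prod isCompact_Icc).of_isClosed_subset
    (hu.preimage_isClosed_of_isClosed (hs.isClosed.prod isClosed_Icc) isClosed_Iic)
    inter_subset_left
  obtain ⟨⟨x₀, t₀⟩, ⟨⟨hx₀, ht₀⟩, hle⟩, hfirst⟩ :=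
    hS.exists_isMinOn ⟨(x, t), ⟨hx, ht⟩, hxt⟩ continuous_snd.continuousOn
  have hpos : 0 < t₀ := ht₀.1.lt_of_ne fun h => (h0 x₀ hx₀).not_ge (h ▸ hle)
  have hbefore : ∀ y ∈ s, ∀ r ∈ Ico 0 t₀, δ < u y r := fun y hy r hr => lt_of_not_ge fun hyr =>
    hr.2.not_ge (hfirst (a := (y, r)) ⟨⟨hy, hr.1, hr.2.le.trans ht₀.2⟩, hyr⟩)
  have hat : ∀ y ∈ s, δ ≤ u y t₀ := fun y hy =>
    ContinuousWithinAt.closure_le (closure_Ico hpos.ne ▸ right_mem_Icc.2 hpos.le)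
      continuousWithinAt_const
      ((hu.comp (Continuous.prodMk_right y).continuousOn fun r hr => ⟨hy, hr⟩) t₀ ht₀
        |>.mono fun r hr => ⟨hr.1, hr.2.le.trans ht₀.2⟩)
      fun r hr => (hbefore y hy r hr).le
  have heq : u x₀ t₀ = δ := le_antisymm hle (hat x₀ hx₀)
  refine ⟨x₀, hx₀, t₀, ⟨hpos, ht₀.2⟩, heq,
    isMinOn_iff.2 fun y hy => heq ▸ hat y hy, isMinOn_iff.2 fun r hr => ?_⟩
  rcases hr.2.lt_or_eq with hr' | rfl
  · exact heq ▸ (hbefore x₀ hx₀ r ⟨hr.1, hr'⟩).le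
  · exact le_rfl

theorem IsMinOn.mul_le_of_robin_left {g : ℝ → ℝ} {a b κ β α r B ε : ℝ} (hab : a < b)
    (hmin : IsMinOn g (Icc a b) a) (hκ : 0 ≤ κ) (hβ : |β| ≤ B) (hg : 0 ≤ g a) (hα : 0 ≤ α)
    (hr : ε ≤ r) (hbc : κ * deriv g a + β * g a = α * (g a - r)) :
    α * ε ≤ (α + B) * g a := by
  have hflux : 0 ≤ κ * deriv g a := mul_nonneg hκ (hmin.deriv_nonneg_of_left_endpoint hab)
  nlinarith [mul_le_mul_of_nonneg_right (neg_le_of_abs_le hβ) hg, mul_le_mul_of_nonneg_left hr hα]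

theorem IsMinOn.mul_le_of_robin_right {g : ℝ → ℝ} {a b κ β α r B ε : ℝ} (hab : a < b)
    (hmin : IsMinOn g (Icc a b) b) (hκ : 0 ≤ κ) (hβ : |β| ≤ B) (hg : 0 ≤ g b) (hα : 0 ≤ α)
    (hr : ε ≤ r) (hbc : κ * deriv g b + β * g b = α * (r - g b)) :
    α * ε ≤ (α + B) * g b := by
  have hflux : κ * deriv g b ≤ 0 :=
    mul_nonpos_of_nonneg_of_nonpos hκ (hmin.deriv_nonpos_of_right_endpoint hab)
  nlinarith [mul_le_mul_of_nonneg_right (le_of_abs_le hβ) hg, mul_le_mul_of_nonneg_left hr hα]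

theorem eventually_mul_lt_nhds_zero (k : ℝ) {c : ℝ} (hc : 0 < c) : ∀ᶠ δ in 𝓝 0, k * δ < c :=
  (continuous_const_mul k).tendsto' 0 0 (mul_zero k) |>.eventually (eventually_lt_nhds hc)

theorem density_uniform_lower_bound_general
    (ε α0 α1 B B' Cc : ℝ)
    (hε : 0 < ε) (hα0 : 0 < α0) (hα1 : 0 < α1) :
    ∃ δ : ℝ, 0 < δ ∧ ∀ (T r0 r1 : ℝ) (a b c f ρ : ℝ → ℝ → ℝ),
      0 < T →
      ε ≤ r0 →
      ε ≤ r1 →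
      ContinuousOn (fun p : ℝ × ℝ => a p.1 p.2) (Set.Icc 0 1 ×ˢ Set.Icc 0 T) →
      (∀ x ∈ Set.Icc (0:ℝ) 1, ∀ t ∈ Set.Icc (0:ℝ) T, 0 ≤ a x t) →
      ContinuousOn (fun p : ℝ × ℝ => b p.1 p.2) (Set.Icc 0 1 ×ˢ Set.Icc 0 T) →
      ContinuousOn (fun p : ℝ × ℝ => deriv (fun y => b y p.2) p.1) (Set.Icc 0 1 ×ˢ Set.Icc 0 T) →
      (∀ t ∈ Set.Icc (0:ℝ) T, ∀ x ∈ Set.Icc (0:ℝ) 1, DifferentiableAt ℝ (fun y => b y t) x) →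
      (∀ x ∈ Set.Icc (0:ℝ) 1, ∀ t ∈ Set.Icc (0:ℝ) T, |b x t| ≤ B) →
      (∀ x ∈ Set.Icc (0:ℝ) 1, ∀ t ∈ Set.Icc (0:ℝ) T, |deriv (fun y => b y t) x| ≤ B') →
      ContinuousOn (fun p : ℝ × ℝ => c p.1 p.2) (Set.Icc 0 1 ×ˢ Set.Icc 0 T) →
      (∀ x ∈ Set.Icc (0:ℝ) 1, ∀ t ∈ Set.Icc (0:ℝ) T, 0 ≤ c x t) →
      (∀ x ∈ Set.Icc (0:ℝ) 1, ∀ t ∈ Set.Icc (0:ℝ) T, c x t ≤ Cc) →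
      ContinuousOn (fun p : ℝ × ℝ => f p.1 p.2) (Set.Icc 0 1 ×ˢ Set.Icc 0 T) →
      (∀ x ∈ Set.Icc (0:ℝ) 1, ∀ t ∈ Set.Icc (0:ℝ) T, ε ≤ f x t) →
      ContinuousOn (fun p : ℝ × ℝ => ρ p.1 p.2) (Set.Icc 0 1 ×ˢ Set.Icc 0 T) →
      (∀ t ∈ Set.Ioc (0:ℝ) T, ContDiffOn ℝ 2 (fun x => ρ x t) (Set.Icc 0 1)) →
      (∀ x ∈ Set.Icc (0:ℝ) 1, ∀ t ∈ Set.Ioc (0:ℝ) T, DifferentiableAt ℝ (fun s => ρ x s) t) →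
      (∀ x ∈ Set.Ioo (0:ℝ) 1, ∀ t ∈ Set.Ioc (0:ℝ) T,
      deriv (fun s => ρ x s) t
      = deriv (fun y => (ε + a y t) * deriv (fun z => ρ z t) y + b y t * ρ y t) x - c x t * ρ x t + f x t) →
      (∀ t ∈ Set.Ioc (0:ℝ) T,
      (ε + a 1 t) * deriv (fun z => ρ z t) 1 + b 1 t * ρ 1 t = α1 * (r1 - ρ 1 t)) →
      (∀ t ∈ Set.Ioc (0:ℝ) T,
      (ε + a 0 t) * deriv (fun z => ρ z t) 0 + b 0 t * ρ 0 t = α0 * (ρ 0 t - r0)) →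
      (∀ x ∈ Set.Icc (0:ℝ) 1, ε ≤ ρ x 0) →
      ∀ x ∈ Set.Icc (0:ℝ) 1, ∀ t ∈ Set.Icc (0:ℝ) T, δ ≤ ρ x t := by
  obtain ⟨δ, hδ, hδε, hδint, hδleft, hδright⟩ := ((eventually_lt_nhds hε).and <|
    (eventually_mul_lt_nhds_zero (B' + Cc) hε).and <|
    (eventually_mul_lt_nhds_zero (α0 + B) (mul_pos hα0 hε)).and
    (eventually_mul_lt_nhds_zero (α1 + B) (mul_pos hα1 hε))).exists_gt
  refine ⟨δ, hδ, fun T r0 r1 a b c f ρ _ hr0 hr1 ha ha0 _ _ hb hbB hbB' _ _ hcC _ hfε hρ hρx _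
    hpde hbc1 hbc0 hinit => ?_⟩
  by_contra! ⟨x, hx, t, ht, hxt⟩
  obtain ⟨x₀, hx₀, t₀, ht₀, hρδ, hmin, hfirst⟩ := exists_first_touch isCompact_Icc hρ
    (fun x hx => hδε.trans_le (hinit x hx)) hx ht hxt.le
  have ht₀' : t₀ ∈ Icc 0 T := Ioc_subset_Icc_self ht₀
  rcases hx₀.1.eq_or_lt with rfl | h0
  · have hbound := hmin.mul_le_of_robin_left zero_lt_one (by linarith [ha0 0 hx₀ t₀ ht₀'])
      (hbB 0 hx₀ t₀ ht₀') (hρδ ▸ hδ.le) hα0.le hr0 (hbc0 t₀ ht₀)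
    exact hδleft.not_ge (hρδ ▸ hbound)
  rcases hx₀.2.eq_or_lt with rfl | h1
  · have hbound := hmin.mul_le_of_robin_right zero_lt_one (by linarith [ha0 1 hx₀ t₀ ht₀'])
      (hbB 1 hx₀ t₀ ht₀') (hρδ ▸ hδ.le) hα1.le hr1 (hbc1 t₀ ht₀)
    exact hδright.not_ge (hρδ ▸ hbound)
  have hnhds : Icc (0 : ℝ) 1 ∈ 𝓝 x₀ := Icc_mem_nhds h0 h1
  have hκ : ContinuousAt (fun y => ε + a y t₀) x₀ := continuousAt_const.add <|
    (ha.comp (Continuous.prodMk_left t₀).continuousOn fun y hy => ⟨hy, ht₀'⟩).continuousAt hnhds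
  have hbal := hpde x₀ ⟨h0, h1⟩ t₀ ht₀ ▸ hfirst.deriv_nonpos_of_right_endpoint ht₀.1
  have hbound := (hmin.isLocalMin hnhds).le_mul_of_flux_balance_nonpos
    ((hρx t₀ ht₀).contDiffAt hnhds) hκ (by linarith [ha0 x₀ hx₀ t₀ ht₀']) (hb t₀ ht₀' x₀ hx₀)
    (hbB' x₀ hx₀ t₀ ht₀') (hcC x₀ hx₀ t₀ ht₀') (hfε x₀ hx₀ t₀ ht₀') (hρδ ▸ hδ.le) hbal
  exact hδint.not_ge (hρδ ▸ hbound)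

theorem density_uniform_lower_bound
    (ε α0 α1 B B' Cc : ℝ)
    (hε : 0 < ε) (hα0 : 0 < α0) (hα1 : 0 < α1)
    (hB : 0 ≤ B) (hB' : 0 ≤ B') (hCc : 0 ≤ Cc) :
    ∃ δ : ℝ, 0 < δ ∧ ∀ (T r0 r1 : ℝ) (a b c f ρ : ℝ → ℝ → ℝ),
      0 < T →
      ε ≤ r0 →
      ε ≤ r1 →
      ContinuousOn (fun p : ℝ × ℝ => a p.1 p.2) (Set.Icc 0 1 ×ˢ Set.Icc 0 T) →
      (∀ x ∈ Set.Icc (0:ℝ) 1, ∀ t ∈ Set.Icc (0:ℝ) T, 0 ≤ a x t) →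
      ContinuousOn (fun p : ℝ × ℝ => b p.1 p.2) (Set.Icc 0 1 ×ˢ Set.Icc 0 T) →
      ContinuousOn (fun p : ℝ × ℝ => deriv (fun y => b y p.2) p.1) (Set.Icc 0 1 ×ˢ Set.Icc 0 T) →
      (∀ t ∈ Set.Icc (0:ℝ) T, ∀ x ∈ Set.Icc (0:ℝ) 1, DifferentiableAt ℝ (fun y => b y t) x) →
      (∀ x ∈ Set.Icc (0:ℝ) 1, ∀ t ∈ Set.Icc (0:ℝ) T, |b x t| ≤ B) →
      (∀ x ∈ Set.Icc (0:ℝ) 1, ∀ t ∈ Set.Icc (0:ℝ) T, |deriv (fun y => b y t) x| ≤ B') →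
      ContinuousOn (fun p : ℝ × ℝ => c p.1 p.2) (Set.Icc 0 1 ×ˢ Set.Icc 0 T) →
      (∀ x ∈ Set.Icc (0:ℝ) 1, ∀ t ∈ Set.Icc (0:ℝ) T, 0 ≤ c x t) →
      (∀ x ∈ Set.Icc (0:ℝ) 1, ∀ t ∈ Set.Icc (0:ℝ) T, c x t ≤ Cc) →
      ContinuousOn (fun p : ℝ × ℝ => f p.1 p.2) (Set.Icc 0 1 ×ˢ Set.Icc 0 T) →
      (∀ x ∈ Set.Icc (0:ℝ) 1, ∀ t ∈ Set.Icc (0:ℝ) T, ε ≤ f x t) →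
      ContinuousOn (fun p : ℝ × ℝ => ρ p.1 p.2) (Set.Icc 0 1 ×ˢ Set.Icc 0 T) →
      (∀ t ∈ Set.Ioc (0:ℝ) T, ContDiffOn ℝ 2 (fun x => ρ x t) (Set.Icc 0 1)) →
      (∀ x ∈ Set.Icc (0:ℝ) 1, ∀ t ∈ Set.Ioc (0:ℝ) T, DifferentiableAt ℝ (fun s => ρ x s) t) →
      (∀ x ∈ Set.Ioo (0:ℝ) 1, ∀ t ∈ Set.Ioc (0:ℝ) T,
      deriv (fun s => ρ x s) t
      = deriv (fun y => (ε + a y t) * deriv (fun z => ρ z t) y + b y t * ρ y t) x - c x t * ρ x t + f x t) →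
      (∀ t ∈ Set.Ioc (0:ℝ) T,
      (ε + a 1 t) * deriv (fun z => ρ z t) 1 + b 1 t * ρ 1 t = α1 * (r1 - ρ 1 t)) →
      (∀ t ∈ Set.Ioc (0:ℝ) T,
      (ε + a 0 t) * deriv (fun z => ρ z t) 0 + b 0 t * ρ 0 t = α0 * (ρ 0 t - r0)) →
      (∀ x ∈ Set.Icc (0:ℝ) 1, ε ≤ ρ x 0) →
      ∀ x ∈ Set.Icc (0:ℝ) 1, ∀ t ∈ Set.Icc (0:ℝ) T, δ ≤ ρ x t :=
  density_uniform_lower_bound_general ε α0 α1 B B' Cc hε hα0 hα1
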